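/- arXiv:2510.12568 — 2 statements merged into one kernel-verified Lean document; each statement's English description precedes it below -/
import Mathlib

section
/- If (x_m) is a bounded real sequence converging to L, then for the Borel method, lim_{y→∞} e^{-y} ∑_{m=0}^∞ x_m y^m / m! = L (regularity of the Borel method for bounded convergent sequences). -/
/-!
The Poisson weights `e^{-y} y^m / m!` are nonnegative, sum to `1`, and each of them tends to `0`
as `y → ∞`. By the Silverman–Toeplitz argument, any such family of weights sums a convergent
sequence to its limit: the first `N` terms carry vanishing weight, and past `N` the sequence is
within `ε` of its limit.
-/

open Filter Topology Finset Real
open scoped Nat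

lemma exists_forall_abs_le_of_tendsto {x : ℕ → ℝ} {L : ℝ} (hx : Tendsto x atTop (𝓝 L)) :
    ∃ D, ∀ m, |x m| ≤ D := by
  obtain ⟨D, hD⟩ := isBounded_iff_forall_norm_le.1 (Metric.isBounded_range_of_tendsto x hx)
  exact ⟨D, fun m => hD _ (Set.mem_range_self m)⟩

lemma summable_mul_of_abs_le {w x : ℕ → ℝ} {D : ℝ} (hw : Summable w) (hw0 : ∀ m, 0 ≤ w m)
    (hx : ∀ m, |x m| ≤ D) : Summable fun m => w m * x m :=
  (hw.mul_right D).of_norm_bounded fun m => by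
    rw [Real.norm_eq_abs, abs_mul, abs_of_nonneg (hw0 m)]
    exact mul_le_mul_of_nonneg_left (hx m) (hw0 m)

section Toeplitz

variable {α : Type*} {l : Filter α} {w : α → ℕ → ℝ}

theorem tendsto_tsum_mul_of_tendsto_zero (hw0 : ∀ᶠ t in l, ∀ m, 0 ≤ w t m)
    (hw1 : ∀ᶠ t in l, HasSum (w t) 1) (hw : ∀ m, Tendsto (fun t => w t m) l (𝓝 0))
    {x : ℕ → ℝ} (hx : Tendsto x atTop (𝓝 0)) :
    Tendsto (fun t => ∑' m, w t m * x m) l (𝓝 0) := by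
  obtain ⟨D, hD⟩ := exists_forall_abs_le_of_tendsto hx
  rw [Metric.tendsto_nhds]
  intro ε hε
  obtain ⟨N, hN⟩ := eventually_atTop.1 (Metric.tendsto_nhds.1 hx (ε / 2) (half_pos hε))
  have hhead : Tendsto (fun t => D * ∑ m ∈ range N, w t m) l (𝓝 0) := by
    simpa using (tendsto_finsetSum (range N) fun m _ => hw m).const_mul D
  filter_upwards [hw0, hw1, hhead.eventually_lt_const (half_pos hε)] with t ht0 ht1 hsmall
  have hmajorant : HasSum (fun m => D * (if m ∈ range N then w t m else 0) + ε / 2 * w t m)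
      (D * ∑ m ∈ range N, w t m + ε / 2) := by
    have hfin : HasSum (fun m => if m ∈ range N then w t m else 0) (∑ m ∈ range N, w t m) := by
      simpa only [sum_ite_mem, inter_self] using
        hasSum_sum_of_ne_finset_zero (s := range N) fun m hm => if_neg hm
    simpa using (hfin.mul_left D).add (ht1.mul_left (ε / 2))
  have hle : ‖∑' m, w t m * x m‖ ≤ D * ∑ m ∈ range N, w t m + ε / 2 := by
    refine tsum_of_norm_bounded hmajorant fun m => ?_
    rw [norm_mul, Real.norm_of_nonneg (ht0 m), Real.norm_eq_abs]
    have hεw : 0 ≤ ε / 2 * w t m := mul_nonneg (half_pos hε).le (ht0 m)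
    split_ifs with hm
    · linarith [mul_le_mul_of_nonneg_left (hD m) (ht0 m)]
    · have hxm : |x m| < ε / 2 := by simpa using hN m (by simpa using hm)
      linarith [mul_le_mul_of_nonneg_left hxm.le (ht0 m)]
  rw [dist_zero_right]
  linarith

theorem tendsto_tsum_mul_of_tendsto (hw0 : ∀ᶠ t in l, ∀ m, 0 ≤ w t m)
    (hw1 : ∀ᶠ t in l, HasSum (w t) 1) (hw : ∀ m, Tendsto (fun t => w t m) l (𝓝 0))
    {x : ℕ → ℝ} {L : ℝ} (hx : Tendsto x atTop (𝓝 L)) :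
    Tendsto (fun t => ∑' m, w t m * x m) l (𝓝 L) := by
  have hx0 : Tendsto (fun m => x m - L) atTop (𝓝 0) := by simpa using hx.sub_const L
  obtain ⟨D, hD⟩ := exists_forall_abs_le_of_tendsto hx0
  have hlim := (tendsto_tsum_mul_of_tendsto_zero hw0 hw1 hw hx0).add_const L
  rw [zero_add] at hlim
  refine hlim.congr' ?_
  filter_upwards [hw0, hw1] with t ht0 ht1
  have hsum := (summable_mul_of_abs_le ht1.summable ht0 hD).hasSum.add (ht1.mul_right L)
  simpa only [← mul_add, sub_add_cancel, one_mul] using hsum.tsum_eq.symm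

end Toeplitz

lemma hasSum_exp_neg_mul_pow_div_factorial (y : ℝ) :
    HasSum (fun m : ℕ => exp (-y) * y ^ m / m !) 1 := by
  have h := (NormedSpace.expSeries_div_hasSum_exp y).mul_left (exp (-y))
  rw [← Real.exp_eq_exp_ℝ, ← Real.exp_add, neg_add_cancel, Real.exp_zero] at h
  simpa only [mul_div_assoc] using h

lemma tendsto_exp_neg_mul_pow_div_factorial (m : ℕ) :
    Tendsto (fun y => exp (-y) * y ^ m / m !) atTop (𝓝 0) := by
  simpa [mul_comm] using (tendsto_pow_mul_exp_neg_atTop_nhds_zero m).div_const (m ! : ℝ)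

theorem stmt_11_general (x : ℕ → ℝ) (L : ℝ)
    (hL : Tendsto x atTop (nhds L)) :
    Tendsto (fun y : ℝ => Real.exp (-y) * ∑' m : ℕ, x m * y ^ m / m.factorial)
      atTop (nhds L) := by
  have hw0 : ∀ᶠ y : ℝ in atTop, ∀ m : ℕ, 0 ≤ exp (-y) * y ^ m / m ! :=
    (eventually_ge_atTop 0).mono fun y hy m => by positivity
  refine (tendsto_tsum_mul_of_tendsto hw0 (.of_forall hasSum_exp_neg_mul_pow_div_factorial)
    tendsto_exp_neg_mul_pow_div_factorial hL).congr fun y => ?_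
  rw [← tsum_mul_left]
  congr 1 with m
  ring

/-- Regularity of the Borel method for bounded convergent sequences: if `|x_m| ≤ C`
and `x_m → L` then `e^{-y} ∑ x_m y^m/m! → L` as `y → ∞`. -/
theorem stmt_11 (x : ℕ → ℝ) (C : ℝ) (hb : ∀ m, |x m| ≤ C) (L : ℝ)
    (hL : Tendsto x atTop (nhds L)) :
    Tendsto (fun y : ℝ => Real.exp (-y) * ∑' m : ℕ, x m * y ^ m / m.factorial)
      atTop (nhds L) :=
  stmt_11_general x L hL
end

section
/- Quantitative Korovkin estimate via the exponential modulus of continuity: Let ℜ be a positive linear operator from C_*[0,∞) to B_*[0,∞), φ ∈ C_*[0,∞) with ‖φ‖_∞ ≤ M, and μ(t) = sup_{ξ≥0}(e^{-t} − e^{-ξ})². Then for δ = √‖ℜμ‖_∞ > 0 and all ξ ≥ 0: |ℜ(φ;ξ) − φ(ξ)| ≤ ω̂(φ,δ)|ℜ(φ₀;ξ) − 1| + 2ω̂(φ,δ) + M|ℜ(φ₀;ξ) − 1|. -/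
/-!
In the variable `x = e^{-t} ∈ (0, 1]`, `ω̂(φ, δ)` is an ordinary modulus of continuity of
`x ↦ φ(-log x)`, so chaining over `⌈|x - y| / δ⌉` steps of length at most `δ` gives
`|φ(t) - φ(ξ)| ≤ (1 + (e^{-t} - e^{-ξ})² / δ²) ω̂(φ, δ)`. Applying the positive linear operator
to this two-sided bound on `φ - φ(ξ)`, and using `(e^{-t} - e^{-ξ})² ≤ μ(t)` and `ℜ(μ; ξ) ≤ δ²`,
gives `|ℜ(φ; ξ) - φ(ξ) ℜ(φ₀; ξ)| ≤ ω̂ ℜ(φ₀; ξ) + ω̂`; the triangle inequality does the rest.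
-/

open Filter

/-- Continuous real functions on `[0,∞)` with a finite limit at infinity. -/
def CStar (f : ℝ → ℝ) : Prop :=
  ContinuousOn f (Set.Ici 0) ∧ ∃ L : ℝ, Tendsto f atTop (nhds L)

/-- Bounded real functions on `[0,∞)` with a finite limit at infinity. -/
def BStar (f : ℝ → ℝ) : Prop :=
  (∃ C : ℝ, ∀ ξ : ℝ, 0 ≤ ξ → |f ξ| ≤ C) ∧ ∃ L : ℝ, Tendsto f atTop (nhds L)

/-- The sup norm `‖f‖_∞ = sup_{ξ ≥ 0} |f(ξ)|`. -/
noncomputable def supNorm (f : ℝ → ℝ) : ℝ := ⨆ ξ : Set.Ici (0:ℝ), |f ξ.1|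

/-- The exponential modulus of continuity
`ω̂(φ,δ) = sup{ |φ(t)-φ(ξ)| : t,ξ ≥ 0, |e^{-t}-e^{-ξ}| ≤ δ }`. -/
noncomputable def omegaHat (φ : ℝ → ℝ) (δ : ℝ) : ℝ :=
  sSup {r : ℝ | ∃ t ξ : ℝ, 0 ≤ t ∧ 0 ≤ ξ ∧
    |Real.exp (-t) - Real.exp (-ξ)| ≤ δ ∧ r = |φ t - φ ξ|}

/-- `μ(t) = sup_{ξ ≥ 0} (e^{-t} - e^{-ξ})²`. -/
noncomputable def muFn (t : ℝ) : ℝ :=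
  ⨆ ξ : Set.Ici (0:ℝ), (Real.exp (-t) - Real.exp (-ξ.1)) ^ 2

lemma cStar_const (c : ℝ) : CStar fun _ => c :=
  ⟨continuousOn_const, c, tendsto_const_nhds⟩

lemma CStar.linComb {f g : ℝ → ℝ} (a b : ℝ) (hf : CStar f) (hg : CStar g) :
    CStar fun t => a * f t + b * g t := by
  obtain ⟨hfc, Lf, hfL⟩ := hf
  obtain ⟨hgc, Lg, hgL⟩ := hg
  exact ⟨(continuousOn_const.mul hfc).add (continuousOn_const.mul hgc), a * Lf + b * Lg,
    (tendsto_const_nhds.mul hfL).add (tendsto_const_nhds.mul hgL)⟩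

lemma cStar_sq_exp_neg_sub (c : ℝ) : CStar fun t => (Real.exp (-t) - c) ^ 2 :=
  ⟨(by fun_prop : Continuous fun t => (Real.exp (-t) - c) ^ 2).continuousOn, (0 - c) ^ 2,
    (Real.tendsto_exp_neg_atTop_nhds_zero.sub tendsto_const_nhds).pow 2⟩

lemma sq_sub_le_max_sq {a b : ℝ} (hb₀ : 0 ≤ b) (hb₁ : b ≤ 1) :
    (a - b) ^ 2 ≤ max (a ^ 2) ((a - 1) ^ 2) := by
  rcases le_total b a with h | h
  · exact le_max_of_le_left (by nlinarith)
  · exact le_max_of_le_right (by nlinarith)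

lemma bddAbove_range_sq_exp_neg_sub (t : ℝ) :
    BddAbove (Set.range fun ξ : Set.Ici (0 : ℝ) => (Real.exp (-t) - Real.exp (-ξ.1)) ^ 2) := by
  refine ⟨max (Real.exp (-t) ^ 2) ((Real.exp (-t) - 1) ^ 2), ?_⟩
  rintro _ ⟨⟨ξ, hξ⟩, rfl⟩
  exact sq_sub_le_max_sq (Real.exp_pos _).le (Real.exp_le_one_iff.mpr (neg_nonpos.mpr hξ))

lemma sq_exp_neg_sub_le_muFn (t : ℝ) {ξ : ℝ} (hξ : 0 ≤ ξ) :
    (Real.exp (-t) - Real.exp (-ξ)) ^ 2 ≤ muFn t :=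
  le_ciSup (bddAbove_range_sq_exp_neg_sub t) ⟨ξ, hξ⟩

-- The supremum over `ξ ≥ 0` is attained in the limits `ξ = 0` and `ξ → ∞`.
lemma muFn_eq_max (t : ℝ) :
    muFn t = max (Real.exp (-t) ^ 2) ((Real.exp (-t) - 1) ^ 2) := by
  have : Nonempty (Set.Ici (0 : ℝ)) := ⟨⟨0, Set.mem_Ici.mpr le_rfl⟩⟩
  refine le_antisymm (ciSup_le fun ⟨ξ, hξ⟩ => ?_) (max_le ?_ ?_)
  · exact sq_sub_le_max_sq (Real.exp_pos _).le (Real.exp_le_one_iff.mpr (neg_nonpos.mpr hξ))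
  · have hlim := (tendsto_const_nhds (x := Real.exp (-t))).sub
      Real.tendsto_exp_neg_atTop_nhds_zero |>.pow 2
    rw [sub_zero] at hlim
    exact le_of_tendsto hlim (eventually_ge_atTop 0 |>.mono fun ξ hξ =>
      sq_exp_neg_sub_le_muFn t hξ)
  · simpa using sq_exp_neg_sub_le_muFn t le_rfl

lemma cStar_muFn : CStar muFn := by
  have hfun : muFn = fun t => max (Real.exp (-t) ^ 2) ((Real.exp (-t) - 1) ^ 2) :=
    funext muFn_eq_max
  rw [hfun]
  exact ⟨(by fun_prop : Continuous _).continuousOn, max (0 ^ 2) ((0 - 1) ^ 2),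
    (Real.tendsto_exp_neg_atTop_nhds_zero.pow 2).max
      ((Real.tendsto_exp_neg_atTop_nhds_zero.sub tendsto_const_nhds).pow 2)⟩

lemma abs_le_supNorm {f : ℝ → ℝ} (hf : ∃ C, ∀ ξ : ℝ, 0 ≤ ξ → |f ξ| ≤ C) {ξ : ℝ} (hξ : 0 ≤ ξ) :
    |f ξ| ≤ supNorm f := by
  obtain ⟨C, hC⟩ := hf
  exact le_ciSup (f := fun ξ : Set.Ici (0 : ℝ) => |f ξ.1|)
    ⟨C, by rintro _ ⟨⟨ξ, hξ⟩, rfl⟩; exact hC ξ hξ⟩ ⟨ξ, hξ⟩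

-- The point `z` dividing `[y, x]` in ratio `n : 1` is within `n δ` of `y`
-- and within `δ` of `x`.
lemma abs_sub_le_natCast_mul_of_abs_sub_le {s : Set ℝ} (hs : Convex ℝ s) {ψ : ℝ → ℝ} {δ ω : ℝ}
    (hψ : ∀ x ∈ s, ∀ y ∈ s, |x - y| ≤ δ → |ψ x - ψ y| ≤ ω) (n : ℕ) :
    ∀ x ∈ s, ∀ y ∈ s, |x - y| ≤ n * δ → |ψ x - ψ y| ≤ n * ω := by
  induction n with
  | zero =>
    intro x _ y _ hxy
    have : x = y := sub_eq_zero.mp (abs_nonpos_iff.mp (by simpa using hxy))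
    simp [this]
  | succ n ih =>
    intro x hx y hy hxy
    have hn : (0 : ℝ) < n + 1 := by positivity
    set z := y + ((n : ℝ) / (n + 1)) • (x - y)
    have hz : z ∈ s := hs.add_smul_sub_mem hy hx
      ⟨by positivity, (div_le_one hn).mpr (by linarith)⟩
    have hxz : x - z = (x - y) / (n + 1) := by simp only [z, smul_eq_mul]; field_simp; ring
    have hzy : z - y = n / (n + 1) * (x - y) := by simp only [z, smul_eq_mul]; ring
    have hxy' : |x - y| / (n + 1) ≤ δ := by
      rw [div_le_iff₀ hn]; push_cast at hxy; linarith
    calc |ψ x - ψ y| ≤ |ψ x - ψ z| + |ψ z - ψ y| := abs_sub_le _ _ _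
      _ ≤ ω + n * ω := by
        gcongr
        · exact hψ x hx z hz (by rw [hxz, abs_div, abs_of_pos hn]; exact hxy')
        · refine ih z hz y hy ?_
          rw [hzy, abs_mul, abs_of_nonneg (by positivity), div_mul_eq_mul_div, mul_div_assoc]
          exact mul_le_mul_of_nonneg_left hxy' n.cast_nonneg
      _ = (n + 1 : ℕ) * ω := by push_cast; ring

lemma Nat.ceil_le_one_add_sq {r : ℝ} (hr : 0 ≤ r) : (⌈r⌉₊ : ℝ) ≤ 1 + r ^ 2 := by
  rcases le_total r 1 with h | h
  · have : ⌈r⌉₊ ≤ 1 := Nat.ceil_le.mpr (by simpa using h)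
    have : (⌈r⌉₊ : ℝ) ≤ 1 := by exact_mod_cast this
    nlinarith
  · nlinarith [Nat.ceil_lt_add_one hr]

lemma abs_sub_le_one_add_sq_div_mul {s : Set ℝ} (hs : Convex ℝ s) {ψ : ℝ → ℝ} {δ ω : ℝ}
    (hδ : 0 < δ) (hψ : ∀ x ∈ s, ∀ y ∈ s, |x - y| ≤ δ → |ψ x - ψ y| ≤ ω)
    {x y : ℝ} (hx : x ∈ s) (hy : y ∈ s) :
    |ψ x - ψ y| ≤ (1 + (x - y) ^ 2 / δ ^ 2) * ω := by
  have hω : 0 ≤ ω := by simpa using hψ x hx x hx (by simpa using hδ.le)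
  have hr : 0 ≤ |x - y| / δ := by positivity
  calc |ψ x - ψ y| ≤ ⌈|x - y| / δ⌉₊ * ω :=
        abs_sub_le_natCast_mul_of_abs_sub_le hs hψ _ x hx y hy
          ((div_le_iff₀ hδ).mp (Nat.le_ceil _))
    _ ≤ (1 + (|x - y| / δ) ^ 2) * ω := by gcongr; exact Nat.ceil_le_one_add_sq hr
    _ = (1 + (x - y) ^ 2 / δ ^ 2) * ω := by rw [div_pow, sq_abs]

lemma abs_sub_le_omegaHat {φ : ℝ → ℝ} {M : ℝ} (hM : ∀ ξ : ℝ, 0 ≤ ξ → |φ ξ| ≤ M) {δ t ξ : ℝ}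
    (ht : 0 ≤ t) (hξ : 0 ≤ ξ) (htξ : |Real.exp (-t) - Real.exp (-ξ)| ≤ δ) :
    |φ t - φ ξ| ≤ omegaHat φ δ := by
  refine le_csSup ⟨2 * M, ?_⟩ ⟨t, ξ, ht, hξ, htξ, rfl⟩
  rintro _ ⟨t, ξ, ht, hξ, -, rfl⟩
  linarith [abs_sub (φ t) (φ ξ), hM t ht, hM ξ hξ]

lemma abs_sub_le_one_add_sq_div_mul_omegaHat {φ : ℝ → ℝ} {M : ℝ}
    (hM : ∀ ξ : ℝ, 0 ≤ ξ → |φ ξ| ≤ M) {δ : ℝ} (hδ : 0 < δ) {t ξ : ℝ} (ht : 0 ≤ t) (hξ : 0 ≤ ξ) :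
    |φ t - φ ξ| ≤ (1 + (Real.exp (-t) - Real.exp (-ξ)) ^ 2 / δ ^ 2) * omegaHat φ δ := by
  have hmem : ∀ {u : ℝ}, 0 ≤ u → Real.exp (-u) ∈ Set.Ioc 0 1 := fun hu =>
    ⟨Real.exp_pos _, Real.exp_le_one_iff.mpr (neg_nonpos.mpr hu)⟩
  have hexp : ∀ {u : ℝ}, u ∈ Set.Ioc (0 : ℝ) 1 → Real.exp (-(-Real.log u)) = u :=
    fun hu => by rw [neg_neg, Real.exp_log hu.1]
  have hnonneg : ∀ {u : ℝ}, u ∈ Set.Ioc (0 : ℝ) 1 → 0 ≤ -Real.log u :=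
    fun hu => neg_nonneg.mpr (Real.log_nonpos hu.1.le hu.2)
  have hψ : ∀ x ∈ Set.Ioc (0 : ℝ) 1, ∀ y ∈ Set.Ioc (0 : ℝ) 1, |x - y| ≤ δ →
      |φ (-Real.log x) - φ (-Real.log y)| ≤ omegaHat φ δ := fun x hx y hy hxy =>
    abs_sub_le_omegaHat hM (hnonneg hx) (hnonneg hy) (by rwa [hexp hx, hexp hy])
  simpa using abs_sub_le_one_add_sq_div_mul (convex_Ioc 0 1) hδ hψ (hmem ht) (hmem hξ)

lemma abs_apply_sub_le_of_abs_sub_le (ℜ : (ℝ → ℝ) → ℝ → ℝ)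
    (hlin : ∀ (f g : ℝ → ℝ) (a b : ℝ), CStar f → CStar g →
      ∀ ξ : ℝ, 0 ≤ ξ → ℜ (fun t => a * f t + b * g t) ξ = a * ℜ f ξ + b * ℜ g ξ)
    (hpos : ∀ f g : ℝ → ℝ, CStar f → CStar g →
      (∀ t : ℝ, 0 ≤ t → f t ≤ g t) → ∀ ξ : ℝ, 0 ≤ ξ → ℜ f ξ ≤ ℜ g ξ)
    {f g : ℝ → ℝ} (hf : CStar f) (hg : CStar g) {a b c : ℝ}
    (hfg : ∀ t : ℝ, 0 ≤ t → |f t - c| ≤ a + b * g t) {ξ : ℝ} (hξ : 0 ≤ ξ) :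
    |ℜ f ξ - c * ℜ (fun _ => 1) ξ| ≤ a * ℜ (fun _ => 1) ξ + b * ℜ g ξ := by
  have h1 := cStar_const 1
  have hlow := hpos _ _ (h1.linComb (-a) (-b) hg) (hf.linComb 1 (-c) h1)
    (fun t ht => by linarith [(abs_le.mp (hfg t ht)).1]) ξ hξ
  have hupp := hpos _ _ (hf.linComb 1 (-c) h1) (h1.linComb a b hg)
    (fun t ht => by linarith [(abs_le.mp (hfg t ht)).2]) ξ hξ
  rw [hlin _ _ _ _ h1 hg ξ hξ, hlin _ _ _ _ hf h1 ξ hξ] at hlow hupp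
  exact abs_le.mpr ⟨by linarith, by linarith⟩

/-- Quantitative Korovkin estimate via the exponential modulus of continuity: for a
positive linear operator `ℜ : C_*[0,∞) → B_*[0,∞)`, `‖φ‖_∞ ≤ M`, and
`δ = √‖ℜμ‖_∞ > 0`, one has for every `ξ ≥ 0`
`|ℜ(φ;ξ) - φ(ξ)| ≤ ω̂(φ,δ)|ℜ(φ₀;ξ) - 1| + 2ω̂(φ,δ) + M|ℜ(φ₀;ξ) - 1|`. -/
theorem stmt_18 (ℜ : (ℝ → ℝ) → ℝ → ℝ)
    (hmap : ∀ f, CStar f → BStar (ℜ f))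
    (hlin : ∀ (f g : ℝ → ℝ) (a b : ℝ), CStar f → CStar g →
      ∀ ξ : ℝ, 0 ≤ ξ → ℜ (fun t => a * f t + b * g t) ξ = a * ℜ f ξ + b * ℜ g ξ)
    (hpos : ∀ f g : ℝ → ℝ, CStar f → CStar g →
      (∀ t : ℝ, 0 ≤ t → f t ≤ g t) → ∀ ξ : ℝ, 0 ≤ ξ → ℜ f ξ ≤ ℜ g ξ)
    (φ : ℝ → ℝ) (hφ : CStar φ) (M : ℝ) (hM : ∀ ξ : ℝ, 0 ≤ ξ → |φ ξ| ≤ M)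
    (δ : ℝ) (hδdef : δ = Real.sqrt (supNorm (ℜ muFn))) (hδ : 0 < δ) :
    ∀ ξ : ℝ, 0 ≤ ξ →
      |ℜ φ ξ - φ ξ| ≤
        omegaHat φ δ * |ℜ (fun _ => 1) ξ - 1| + 2 * omegaHat φ δ +
          M * |ℜ (fun _ => 1) ξ - 1| := by
  intro ξ hξ
  set ω := omegaHat φ δ
  set R₁ := ℜ (fun _ => 1) ξ
  have hω : 0 ≤ ω := by
    simpa using abs_sub_le_omegaHat hM le_rfl le_rfl (by simpa using hδ.le) (φ := φ) (t := 0)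
  have hδsq : δ ^ 2 = supNorm (ℜ muFn) := by
    rw [hδdef, Real.sq_sqrt (Real.sqrt_pos.mp (hδdef ▸ hδ)).le]
  have hμ : ℜ (fun t => (Real.exp (-t) - Real.exp (-ξ)) ^ 2) ξ ≤ δ ^ 2 :=
    calc _ ≤ ℜ muFn ξ := hpos _ _ (cStar_sq_exp_neg_sub _) cStar_muFn
            (fun t _ => sq_exp_neg_sub_le_muFn t hξ) ξ hξ
      _ ≤ supNorm (ℜ muFn) := (le_abs_self _).trans (abs_le_supNorm (hmap _ cStar_muFn).1 hξ)
      _ = δ ^ 2 := hδsq.symm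
  have hsand : |ℜ φ ξ - φ ξ * R₁| ≤ ω * R₁ + ω := by
    refine (abs_apply_sub_le_of_abs_sub_le ℜ hlin hpos hφ (cStar_sq_exp_neg_sub (Real.exp (-ξ)))
      (a := ω) (b := ω / δ ^ 2) (fun t ht => (abs_sub_le_one_add_sq_div_mul_omegaHat hM hδ ht hξ).trans_eq ?_) hξ).trans ?_
    · ring
    · gcongr
      calc ω / δ ^ 2 * _ ≤ ω / δ ^ 2 * δ ^ 2 := by gcongr
        _ = ω := div_mul_cancel₀ ω (by positivity)
  calc |ℜ φ ξ - φ ξ| = |(ℜ φ ξ - φ ξ * R₁) + φ ξ * (R₁ - 1)| := by ring_nf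
    _ ≤ |ℜ φ ξ - φ ξ * R₁| + |φ ξ| * |R₁ - 1| := by rw [← abs_mul]; exact abs_add_le _ _
    _ ≤ (ω * R₁ + ω) + M * |R₁ - 1| := by gcongr; exact hM ξ hξ
    _ ≤ ω * |R₁ - 1| + 2 * ω + M * |R₁ - 1| := by
      nlinarith [mul_le_mul_of_nonneg_left (le_abs_self (R₁ - 1)) hω]
end
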